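/- arXiv:1703.09892 — 4 statements merged into one kernel-verified Lean document; each statement's English description precedes it below -/
import Mathlib

section
/- Let G = (V,E) be an infinite, connected, locally finite graph, let o ∈ V, let A ⊆ V be a finite set of vertices containing o, and let p ∈ (0,1). Starting from the unit point mass δ_o at o, the minimum number of toppling moves needed to transport mass p outside of A satisfies N_p(G, A, δ_o) ≤ (1−p)^{−1} · Vol(A) · E_o[T_A], where Vol(A) = |A| is the number of vertices of A, T_A is the first exit time of simple random walk on G started at o from the set A, and E_o[T_A] = Σ_{k≥1} P_o(X_j ∈ A for all 0 ≤ j ≤ k−1) is its expectation. -/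
open scoped Classical ENNReal

noncomputable section

variable {V : Type*}

/-- A mass distribution: a nonnegative, finitely supported function on the vertices. -/
def IsMassDist (μ : V → ℝ) : Prop :=
  (∀ v, 0 ≤ μ v) ∧ (Function.support μ).Finite

/-- The unit point mass at a vertex `o`. -/
def pointMass (o : V) : V → ℝ := fun u => if u = o then 1 else 0

/-- The result of toppling mass `m` at the vertex `v`: remove mass `m` from `v` and
distribute it equally among the neighbors of `v`. -/
def topple (G : SimpleGraph V) [G.LocallyFinite] (μ : V → ℝ) (v : V) (m : ℝ) : V → ℝ :=
  fun u => μ u - (if u = v then m else 0) + (if G.Adj v u then m / (G.degree v : ℝ) else 0)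

/-- `ToppleSeq G μ₀ t μ₁` : there is a sequence of `t` valid toppling moves
taking `μ₀` to `μ₁`. -/
def ToppleSeq (G : SimpleGraph V) [G.LocallyFinite] (μ₀ : V → ℝ) (t : ℕ) (μ₁ : V → ℝ) : Prop :=
  ∃ μs : ℕ → V → ℝ, μs 0 = μ₀ ∧ μs t = μ₁ ∧
    ∀ i < t, ∃ v m, 0 < m ∧ m ≤ μs i v ∧ μs (i + 1) = topple G (μs i) v m

/-- `CanTransport G A p μ₀ t` : starting from `μ₀` there are `t` toppling moves after which
the total mass outside of `A` is at least `p`. -/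
def CanTransport (G : SimpleGraph V) [G.LocallyFinite] (A : Set V) (p : ℝ)
    (μ₀ : V → ℝ) (t : ℕ) : Prop :=
  ∃ μ₁ : V → ℝ, ToppleSeq G μ₀ t μ₁ ∧ p ≤ ∑' v : {v : V // v ∉ A}, μ₁ v

/-- The open ball of radius `n` around `o` in the graph distance. -/
def gball (G : SimpleGraph V) (o : V) (n : ℕ) : Set V := {u | G.dist o u < n}


/-- `killedKernel G A k x y` is the probability that simple random walk on `G` started at `x`
is at `y` at time `k` and has stayed inside `A` at all times `0, 1, …, k-1`. -/
def killedKernel (G : SimpleGraph V) [G.LocallyFinite] (A : Set V) : ℕ → V → V → ℝ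
  | 0 => fun x y => if x = y then 1 else 0
  | (k + 1) => fun x y =>
      ∑ z ∈ G.neighborFinset y,
        killedKernel G A k x z * (if z ∈ A then ((G.degree z : ℝ))⁻¹ else 0)

/-! Topple in rounds, each toppling the whole current mass at every vertex of `A`. After
`k` rounds the mass on `A` is the law at time `k` of the walk from `o` killed on leaving `A`, so by
conservation of mass the mass outside `A` is `1 - P_o(T_A > k)`. A round costs at most `|A|`
moves, and the first `k` with `P_o(T_A > k) ≤ 1 - p` has
`k (1 - p) ≤ ∑_{j < k} P_o(T_A > j) ≤ E_o[T_A]`.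
`E_o[T_A]` is finite because `P_o(T_A > k)` decays geometrically: every vertex of the finite set
`A` has a path out of `A`, so `P_z(T_A > n) ≤ c < 1` on `A` for some `n`, and by the Markov
property `P_o(T_A > m n) ≤ c ^ m`. -/

open Finset

lemma summable_of_antitone_of_le_pow {f : ℕ → ℝ} (hf0 : 0 ≤ f) (hf : Antitone f) {n : ℕ}
    (hn : n ≠ 0) {c : ℝ} (hc1 : c < 1) (h : ∀ m, f (m * n) ≤ c ^ m) : Summable f := by
  have : NeZero n := ⟨hn⟩
  have hc0 : 0 ≤ c := by simpa using (hf0 _).trans (h 1)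
  rw [← (Nat.divModEquiv n).symm.summable_iff]
  have hg : Summable fun p : ℕ × Fin n => c ^ p.1 * 1 :=
    (summable_geometric_of_lt_one hc0 hc1).mul_of_nonneg (Summable.of_finite (f := fun _ => 1))
      (fun _ => by positivity) fun _ => zero_le_one
  refine Summable.of_nonneg_of_le (fun _ => hf0 _) (fun p => ?_) hg
  simpa using (hf (Nat.le_add_right _ _)).trans (h p.1)

lemma exists_le_and_nat_mul_le_tsum {f : ℕ → ℝ} (hf0 : 0 ≤ f) (hf : Summable f) {q : ℝ}
    (hq : 0 < q) : ∃ k : ℕ, f k ≤ q ∧ k * q ≤ ∑' i, f i := by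
  have hex : ∃ k, f k ≤ q := (hf.tendsto_atTop_zero.eventually_le_const hq).exists
  refine ⟨Nat.find hex, Nat.find_spec hex, ?_⟩
  calc (Nat.find hex : ℝ) * q = ∑ _i ∈ range (Nat.find hex), q := by simp
    _ ≤ ∑ i ∈ range (Nat.find hex), f i :=
      sum_le_sum fun i hi => (not_le.1 (Nat.find_min hex (mem_range.1 hi))).le
    _ ≤ ∑' i, f i := hf.sum_le_tsum _ fun i _ => hf0 i

lemma HasSum.tsum_subtype_notMem_eq_sub {f : V → ℝ} {a : ℝ} (hf : HasSum f a) {A : Set V}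
    (hA : A.Finite) : ∑' v : {v : V // v ∉ A}, f v = a - ∑ v ∈ hA.toFinset, f v := by
  have hsplit := hf.summable.tsum_subtype_add_tsum_subtype_compl A
  have hA' : ∑' x : A, f x = ∑ x ∈ hA.toFinset, f x := by
    rw [← Finset.tsum_subtype', hA.coe_toFinset]
  rw [hf.tsum_eq, hA'] at hsplit
  exact eq_sub_of_add_eq' hsplit

section Toppling

variable (G : SimpleGraph V) [G.LocallyFinite]

lemma topple_eq_add (μ : V → ℝ) (v : V) (m : ℝ) : topple G μ v m = μ + topple G 0 v m := by
  ext u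
  simp only [topple, Pi.add_apply, Pi.zero_apply]
  ring

@[simp]
lemma topple_zero_zero (v : V) : topple G 0 v 0 = 0 := by
  ext u
  simp [topple]

lemma topple_zero_apply_nonneg {v u : V} {m : ℝ} (hm : 0 ≤ m) (huv : u ≠ v) :
    0 ≤ topple G 0 v m u := by
  simp only [topple, Pi.zero_apply, if_neg huv, sub_zero, zero_add]
  split_ifs <;> positivity

lemma hasSum_topple_zero {v : V} (hv : G.degree v ≠ 0) (m : ℝ) :
    HasSum (topple G 0 v m) 0 := by
  have hnbr : HasSum (fun u => if G.Adj v u then m / G.degree v else 0) m := by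
    have hsum : ∑ u ∈ G.neighborFinset v, (if G.Adj v u then m / G.degree v else 0) = m := by
      rw [sum_congr rfl fun u hu => if_pos ((G.mem_neighborFinset v u).1 hu), sum_const,
        SimpleGraph.card_neighborFinset_eq_degree, nsmul_eq_mul,
        mul_div_cancel₀ _ (Nat.cast_ne_zero.2 hv)]
    have h := hasSum_sum_of_ne_finset_zero (L := SummationFilter.unconditional V)
      (f := fun u => if G.Adj v u then m / G.degree v else 0)
      fun u hu => if_neg fun h => hu ((G.mem_neighborFinset v u).2 h)
    rwa [hsum] at h
  have hsplit : topple G 0 v m =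
      fun u => -(if u = v then m else 0) + if G.Adj v u then m / G.degree v else 0 := by
    ext u
    simp only [topple, Pi.zero_apply]
    ring
  have h := (hasSum_ite_eq v m).neg.add hnbr
  rwa [neg_add_cancel, ← hsplit] at h

lemma hasSum_topple {μ : V → ℝ} {a : ℝ} (h : HasSum μ a) {v : V} (hv : G.degree v ≠ 0)
    (m : ℝ) : HasSum (topple G μ v m) a := by
  rw [topple_eq_add, ← add_zero a]
  exact h.add (hasSum_topple_zero G hv m)

lemma toppleSeq_zero (μ : V → ℝ) : ToppleSeq G μ 0 μ :=
  ⟨fun _ => μ, rfl, rfl, by simp⟩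

lemma ToppleSeq.snoc {μ₀ μ : V → ℝ} {t : ℕ} (h : ToppleSeq G μ₀ t μ) {v : V} {m : ℝ}
    (hm : 0 < m) (hmv : m ≤ μ v) : ToppleSeq G μ₀ (t + 1) (topple G μ v m) := by
  obtain ⟨μs, h0, rfl, hstep⟩ := h
  refine ⟨Function.update μs (t + 1) (topple G (μs t) v m), by simp [h0], by simp,
    fun i hi => ?_⟩
  rcases (Nat.lt_succ_iff.1 hi).lt_or_eq with hi | rfl
  · obtain ⟨w, m', hm', hm'w, hnext⟩ := hstep i hi
    refine ⟨w, m', hm', ?_, ?_⟩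
    · rwa [Function.update_of_ne (by omega)]
    · rw [Function.update_of_ne (by omega), Function.update_of_ne (by omega), hnext]
  · exact ⟨v, m, hm, by simpa using hmv, by simp⟩

lemma ToppleSeq.hasSum (hdeg : ∀ v, G.degree v ≠ 0) {μ₀ μ : V → ℝ} {t : ℕ} {a : ℝ}
    (h : ToppleSeq G μ₀ t μ) (h₀ : HasSum μ₀ a) : HasSum μ a := by
  obtain ⟨μs, h0, rfl, hstep⟩ := h
  suffices ∀ i ≤ t, HasSum (μs i) a from this t le_rfl
  intro i hi
  induction i with
  | zero => rwa [h0]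
  | succ i ih =>
    obtain ⟨v, m, -, -, hnext⟩ := hstep i hi
    rw [hnext]
    exact hasSum_topple G (ih (by omega)) (hdeg v) m

/-- Legal because a toppling at `v` only adds mass at the other vertices; zero masses cost
no move. -/
lemma ToppleSeq.exists_add_sum_topple {μ₀ μ : V → ℝ} {t : ℕ} (h : ToppleSeq G μ₀ t μ)
    (s : Finset V) (m : V → ℝ) (hm0 : ∀ v ∈ s, 0 ≤ m v) (hmμ : ∀ v ∈ s, m v ≤ μ v) :
    ∃ t' ≤ t + #s, ToppleSeq G μ₀ t' (μ + ∑ v ∈ s, topple G 0 v (m v)) := by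
  induction s using Finset.induction_on with
  | empty => exact ⟨t, by simp, by simpa using h⟩
  | insert a s ha ih =>
    obtain ⟨t', ht', h'⟩ := ih (fun v hv => hm0 v (mem_insert_of_mem hv))
      (fun v hv => hmμ v (mem_insert_of_mem hv))
    rw [sum_insert ha, add_comm (topple G 0 a (m a)), ← add_assoc, card_insert_of_notMem ha]
    rcases (hm0 a (mem_insert_self a s)).eq_or_lt with hma | hma
    · rw [← hma, topple_zero_zero, add_zero]
      exact ⟨t', by omega, h'⟩
    · refine ⟨t' + 1, by omega, ?_⟩
      have hgain : 0 ≤ (∑ v ∈ s, topple G 0 v (m v)) a := by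
        rw [Finset.sum_apply]
        exact sum_nonneg fun v hv => topple_zero_apply_nonneg G (hm0 v (mem_insert_of_mem hv))
          (ne_of_mem_of_not_mem hv ha).symm
      rw [← topple_eq_add]
      refine h'.snoc G hma ?_
      simp only [Pi.add_apply]
      linarith [hmμ a (mem_insert_self a s)]

lemma sum_topple_zero_apply (s : Finset V) (m : V → ℝ) (u : V) :
    (∑ v ∈ s, topple G 0 v (m v)) u =
      ∑ v ∈ s, (if G.Adj v u then m v / G.degree v else 0) - if u ∈ s then m u else 0 := by
  simp only [Finset.sum_apply, topple, Pi.zero_apply, zero_sub, sum_add_distrib, sum_neg_distrib,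
    sum_ite_eq]
  ring

end Toppling

section KilledWalk

variable (G : SimpleGraph V) [G.LocallyFinite] (A : Set V)

/-- `killedStep G A f z = E_z[f(X₁); z ∈ A]`: the transition operator of simple random walk
killed on leaving `A`. -/
def killedStep (f : V → ℝ) : V → ℝ :=
  A.indicator fun z => (G.degree z : ℝ)⁻¹ * ∑ y ∈ G.neighborFinset z, f y

/-- `survival G A k z = P_z(T_A > k)`. -/
def survival (k : ℕ) : V → ℝ := (killedStep G A)^[k] (A.indicator 1)

lemma killedStep_mono : Monotone (killedStep G A) := fun f g hfg =>
  Set.indicator_mono fun z => by dsimp only; gcongr with y; exact hfg y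

lemma killedStep_smul (c : ℝ) (f : V → ℝ) : killedStep G A (c • f) = c • killedStep G A f := by
  ext z
  by_cases hz : z ∈ A <;> simp [killedStep, hz, mul_sum, mul_left_comm]

lemma iterate_killedStep_smul (k : ℕ) (c : ℝ) (f : V → ℝ) :
    (killedStep G A)^[k] (c • f) = c • (killedStep G A)^[k] f :=
  (show Function.Commute (killedStep G A) (c • ·) from killedStep_smul G A c).iterate_left k
    |>.eq f

lemma killedStep_nonneg {f : V → ℝ} (hf : 0 ≤ f) : 0 ≤ killedStep G A f :=
  Set.indicator_nonneg fun z _ => mul_nonneg (by positivity) (sum_nonneg fun y _ => hf y)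

lemma killedStep_le_indicator_one {f : V → ℝ} (hf : f ≤ 1) :
    killedStep G A f ≤ A.indicator 1 :=
  Set.indicator_mono fun z => calc
    (G.degree z : ℝ)⁻¹ * ∑ y ∈ G.neighborFinset z, f y
      ≤ (G.degree z : ℝ)⁻¹ * G.degree z := by
        gcongr
        simpa using sum_le_card_nsmul (G.neighborFinset z) f 1 fun y _ => hf y
    _ ≤ 1 := inv_mul_le_one_of_le₀ le_rfl (by positivity)

lemma survival_succ (k : ℕ) : survival G A (k + 1) = killedStep G A (survival G A k) :=
  Function.iterate_succ_apply' ..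

lemma survival_nonneg (k : ℕ) : 0 ≤ survival G A k := by
  induction k with
  | zero => exact Set.indicator_nonneg fun _ _ => zero_le_one
  | succ k ih => rw [survival_succ]; exact killedStep_nonneg G A ih

lemma survival_le_indicator_one (k : ℕ) : survival G A k ≤ A.indicator 1 := by
  cases k with
  | zero => exact le_rfl
  | succ k =>
    rw [survival_succ]
    exact killedStep_le_indicator_one G A
      ((survival_le_indicator_one k).trans (Set.indicator_le_self' fun _ _ => zero_le_one))

lemma survival_le_one (k : ℕ) : survival G A k ≤ 1 :=
  (survival_le_indicator_one G A k).trans (Set.indicator_le_self' fun _ _ => zero_le_one)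

lemma survival_antitone : Antitone (survival G A) :=
  antitone_nat_of_succ_le fun k => by
    rw [survival, Function.iterate_succ_apply]
    exact (killedStep_mono G A).iterate k (survival_le_indicator_one G A 1)

lemma survival_add_le {n : ℕ} {c : ℝ} (hc : survival G A n ≤ c • A.indicator 1) (k : ℕ) :
    survival G A (k + n) ≤ c • survival G A k := by
  rw [survival, Function.iterate_add_apply, survival, ← iterate_killedStep_smul]
  exact (killedStep_mono G A).iterate k hc

lemma survival_mul_le_pow {n : ℕ} {c : ℝ} (hc0 : 0 ≤ c) (hc : ∀ z ∈ A, survival G A n z ≤ c)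
    (m : ℕ) (x : V) : survival G A (m * n) x ≤ c ^ m := by
  have hcn : survival G A n ≤ c • A.indicator 1 := fun z => by
    by_cases hz : z ∈ A
    · simpa [hz] using hc z hz
    · simpa [hz] using survival_le_indicator_one G A n z
  induction m with
  | zero => simpa using survival_le_one G A 0 x
  | succ m ih => calc
      survival G A ((m + 1) * n) x ≤ c * survival G A (m * n) x := by
        rw [Nat.succ_mul]; exact survival_add_le G A hcn (m * n) x
      _ ≤ c ^ (m + 1) := by rw [pow_succ']; gcongr

lemma survival_lt_one_of_walk (hdeg : ∀ v, G.degree v ≠ 0) {z w : V} (p : G.Walk z w)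
    (hw : w ∉ A) : survival G A p.length z < 1 := by
  induction p with
  | nil => simp [survival, hw]
  | @cons u v w huv p ih =>
    by_cases hu : u ∈ A
    · have hdu : (0 : ℝ) < G.degree u := Nat.cast_pos.2 (Nat.pos_of_ne_zero (hdeg u))
      have hlt : ∑ y ∈ G.neighborFinset u, survival G A p.length y < G.degree u := calc
        _ < ∑ _y ∈ G.neighborFinset u, (1 : ℝ) :=
          sum_lt_sum (fun y _ => survival_le_one G A _ y)
            ⟨v, (G.mem_neighborFinset u v).2 huv, ih hw⟩
        _ = G.degree u := by simp
      rw [SimpleGraph.Walk.length_cons, survival_succ, killedStep, Set.indicator_of_mem hu]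
      calc (G.degree u : ℝ)⁻¹ * ∑ y ∈ G.neighborFinset u, survival G A p.length y
          < (G.degree u : ℝ)⁻¹ * G.degree u := by gcongr
        _ = 1 := inv_mul_cancel₀ hdu.ne'
    · simp [survival_succ, killedStep, hu]

lemma eventually_survival_lt_one (hconn : G.Connected) (hdeg : ∀ v, G.degree v ≠ 0) {w : V}
    (hw : w ∉ A) (z : V) : ∀ᶠ n in Filter.atTop, survival G A n z < 1 := by
  obtain ⟨p⟩ := hconn.preconnected z w
  filter_upwards [Filter.eventually_ge_atTop p.length] with n hn
  exact (survival_antitone G A hn z).trans_lt (survival_lt_one_of_walk G A hdeg p hw)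

lemma summable_survival [Infinite V] (hconn : G.Connected) (hA : A.Finite) (x : V) :
    Summable fun k => survival G A k x := by
  have hdeg v : G.degree v ≠ 0 := (hconn.preconnected.degree_pos_of_nontrivial v).ne'
  obtain ⟨w, hw⟩ := hA.infinite_compl.nonempty
  obtain ⟨n, hn0, hn⟩ := ((Filter.eventually_gt_atTop 0).and
    ((Filter.eventually_all_finite hA).2 fun z _ =>
      eventually_survival_lt_one G A hconn hdeg hw z)).exists
  obtain ⟨c, hc, hc1⟩ : ∃ c, (∀ z ∈ A, survival G A n z ≤ c) ∧ c < 1 :=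
    (((Filter.eventually_all_finite hA).2 fun z hz =>
      eventually_nhdsWithin_of_eventually_nhds (eventually_ge_nhds (hn z hz))).and
      (self_mem_nhdsWithin (s := Set.Iio (1 : ℝ)))).exists
  have hc0 : 0 ≤ max c 0 := le_max_right _ _
  exact summable_of_antitone_of_le_pow (fun k => survival_nonneg G A k x)
    (fun i j hij => survival_antitone G A hij x) hn0.ne' (max_lt hc1 zero_lt_one)
    (survival_mul_le_pow G A hc0 (fun z hz => (hc z hz).trans (le_max_left _ _)) · x)

end KilledWalk

section KilledKernel

variable (G : SimpleGraph V) [G.LocallyFinite] {A : Set V} (hA : A.Finite)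

lemma killedKernel_nonneg (k : ℕ) (x y : V) : 0 ≤ killedKernel G A k x y := by
  induction k generalizing y with
  | zero => simp only [killedKernel]; positivity
  | succ k ih =>
    simp only [killedKernel]
    exact sum_nonneg fun z _ => mul_nonneg (ih z) (by positivity)

lemma sum_neighborFinset_indicator (f : V → ℝ) (v : V) :
    ∑ y ∈ G.neighborFinset v, A.indicator f y =
      ∑ y ∈ hA.toFinset, if G.Adj v y then f y else 0 := by
  simp only [Set.indicator_apply, ← sum_filter]
  congr 1
  ext y
  simp [and_comm]

lemma killedKernel_succ_eq_sum (k : ℕ) (x u : V) :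
    killedKernel G A (k + 1) x u =
      ∑ v ∈ hA.toFinset, if G.Adj v u then killedKernel G A k x v / G.degree v else 0 := by
  have hind : ∀ z, killedKernel G A k x z * (if z ∈ A then (G.degree z : ℝ)⁻¹ else 0) =
      A.indicator (fun z => killedKernel G A k x z / G.degree z) z := fun z => by
    by_cases hz : z ∈ A <;> simp [hz, div_eq_mul_inv]
  simp only [killedKernel, hind, sum_neighborFinset_indicator G hA, G.adj_comm u]

lemma sum_killedKernel_mul_eq_iterate (k : ℕ) (x : V) (f : V → ℝ) :
    ∑ y ∈ hA.toFinset, killedKernel G A k x y * f y =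
      (killedStep G A)^[k] (A.indicator f) x := by
  induction k generalizing f with
  | zero => simp [killedKernel, Set.indicator_apply]
  | succ k ih =>
    have hstep : A.indicator (fun v => (G.degree v : ℝ)⁻¹ *
        ∑ y ∈ hA.toFinset, if G.Adj v y then f y else 0) = killedStep G A (A.indicator f) := by
      simp only [killedStep, sum_neighborFinset_indicator G hA]
    rw [Function.iterate_succ_apply, ← hstep, ← ih]
    simp only [killedKernel_succ_eq_sum G hA, sum_mul, mul_sum, ite_mul, zero_mul, mul_ite,
      mul_zero]
    rw [sum_comm]
    refine sum_congr rfl fun v _ => sum_congr rfl fun y _ => ?_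
    split_ifs <;> ring

lemma sum_killedKernel_eq_survival (k : ℕ) (x : V) :
    ∑ y ∈ hA.toFinset, killedKernel G A k x y = survival G A k x := by
  simpa [survival] using sum_killedKernel_mul_eq_iterate G hA k x 1

end KilledKernel

lemma exists_toppleSeq_eq_killedKernel (G : SimpleGraph V) [G.LocallyFinite] {A : Set V}
    (hA : A.Finite) (o : V) (k : ℕ) :
    ∃ t ≤ k * #hA.toFinset, ∃ ν, ToppleSeq G (pointMass o) t ν ∧
      ∀ u ∈ A, ν u = killedKernel G A k o u := by
  induction k with
  | zero => exact ⟨0, by simp, pointMass o, toppleSeq_zero G _, fun u _ => by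
      simp [pointMass, killedKernel, eq_comm]⟩
  | succ k ih =>
    obtain ⟨t, ht, ν, hν, hνA⟩ := ih
    obtain ⟨t', ht', hν'⟩ := hν.exists_add_sum_topple G hA.toFinset (killedKernel G A k o)
      (fun v _ => killedKernel_nonneg G k o v) fun v hv => (hνA v (hA.mem_toFinset.1 hv)).ge
    refine ⟨t', by rw [Nat.succ_mul]; omega, _, hν', fun u hu => ?_⟩
    rw [Pi.add_apply, sum_topple_zero_apply, if_pos (hA.mem_toFinset.2 hu), hνA u hu,
      killedKernel_succ_eq_sum G hA]
    ring

theorem general_upper_bound_volume_exit_time_general {V : Type*} (G : SimpleGraph V) [G.LocallyFinite]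
    [Infinite V] (hconn : G.Connected) (o : V) (A : Set V) (hA : A.Finite)
    (p : ℝ) (hp1 : p < 1) :
    ∃ t : ℕ, CanTransport G A p (pointMass o) t ∧
      (t : ℝ) ≤ (1 - p)⁻¹ * (hA.toFinset.card : ℝ) *
        ∑' k : ℕ, ∑ y ∈ hA.toFinset, killedKernel G A k o y := by
  have hdeg v : G.degree v ≠ 0 := (hconn.preconnected.degree_pos_of_nontrivial v).ne'
  simp only [sum_killedKernel_eq_survival G hA]
  obtain ⟨k, hk, hkE⟩ := exists_le_and_nat_mul_le_tsum (fun i => survival_nonneg G A i o)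
    (summable_survival G A hconn hA o) (sub_pos.2 hp1)
  obtain ⟨t, ht, ν, hν, hνA⟩ := exists_toppleSeq_eq_killedKernel G hA o k
  refine ⟨t, ⟨ν, hν, ?_⟩, ?_⟩
  · rw [(hν.hasSum G hdeg (hasSum_ite_eq o 1)).tsum_subtype_notMem_eq_sub hA,
      sum_congr rfl fun u hu => hνA u (hA.mem_toFinset.1 hu), sum_killedKernel_eq_survival G hA]
    linarith
  · calc (t : ℝ) ≤ k * #hA.toFinset := by exact_mod_cast ht
      _ ≤ ((1 - p)⁻¹ * ∑' i, survival G A i o) * #hA.toFinset := by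
        gcongr
        rwa [le_inv_mul_iff₀ (sub_pos.2 hp1), mul_comm]
      _ = _ := by ring

/-- **General upper bound via volume and exit time** (Florescu–Peres–Rácz, Theorem 1.3).
Let `G` be an infinite, connected, locally finite graph, `o ∈ A ⊆ V` with `A` finite and
`p ∈ (0,1)`. Starting from the unit point mass at `o`, mass `p` can be transported outside of `A`
using at most `(1-p)⁻¹ · Vol(A) · E_o[T_A]` toppling moves, where
`E_o[T_A] = ∑_{k ≥ 1} P_o(X_j ∈ A for all 0 ≤ j ≤ k-1)
          = ∑_{k ≥ 0} ∑_{y ∈ A} killedKernel G A k o y`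
is the expected exit time from `A` of simple random walk started at `o`. -/
theorem general_upper_bound_volume_exit_time {V : Type*} (G : SimpleGraph V) [G.LocallyFinite]
    [Infinite V] (hconn : G.Connected) (o : V) (A : Set V) (hA : A.Finite) (hoA : o ∈ A)
    (p : ℝ) (hp0 : 0 < p) (hp1 : p < 1) :
    ∃ t : ℕ, CanTransport G A p (pointMass o) t ∧
      (t : ℝ) ≤ (1 - p)⁻¹ * (hA.toFinset.card : ℝ) *
        ∑' k : ℕ, ∑ y ∈ hA.toFinset, killedKernel G A k o y :=
  general_upper_bound_volume_exit_time_general G hconn o A hA p hp1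
end
end

section
/- Let p ∈ (0,1). Starting from the unit point mass δ_o at the origin o of ℤ (the nearest-neighbor graph on the integers), the minimum number of toppling moves needed to transport mass p to distance at least n from the origin satisfies N_p(ℤ, B_n, δ_o) ≥ (p²/2)·n³ for every integer n ≥ 1. -/
open scoped Classical ENNReal

noncomputable section

variable {V : Type*}

/-- The nearest-neighbor graph on `ℤ`: `x ∼ y` iff `|x - y| = 1`. -/
def intGraph : SimpleGraph ℤ where
  Adj u v := |u - v| = 1
  symm := by
    constructor
    intro u v h
    rw [abs_sub_comm]
    exact h
  loopless := by
    constructor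
    intro u h
    simp at h

noncomputable instance intGraph.locallyFinite (u : ℤ) : Fintype (intGraph.neighborSet u) :=
  Set.Finite.fintype <| by
    apply Set.Finite.subset ((Set.finite_singleton (u - 1)).insert (u + 1))
    intro v hv
    have hv' : |u - v| = 1 := hv
    rw [abs_eq (by norm_num : (0:ℤ) ≤ 1)] at hv'
    simp only [Set.mem_insert_iff, Set.mem_singleton_iff]
    omega

namespace ZLowerAux

lemma adj_iff (a b : ℤ) : intGraph.Adj a b ↔ b = a + 1 ∨ b = a - 1 := by
  show |a - b| = 1 ↔ _
  rw [abs_eq (by norm_num : (0:ℤ) ≤ 1)]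
  omega

lemma degree_eq (v : ℤ) : intGraph.degree v = 2 := by
  have h : intGraph.neighborFinset v = {v + 1, v - 1} := by
    ext u
    rw [SimpleGraph.mem_neighborFinset, adj_iff]
    simp
  rw [← SimpleGraph.card_neighborFinset_eq_degree, h]
  rw [Finset.card_insert_of_notMem (by simp; omega), Finset.card_singleton]

lemma topple_apply (μ : ℤ → ℝ) (v : ℤ) (m : ℝ) (u : ℤ) :
    topple intGraph μ v m u =
      μ u - (if u = v then m else 0)
        + ((if u = v + 1 then m / 2 else 0) + (if u = v - 1 then m / 2 else 0)) := by
  have hd : (intGraph.degree v : ℝ) = 2 := by rw [degree_eq]; norm_num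
  unfold topple
  rw [hd]
  have h : (if intGraph.Adj v u then m / 2 else 0)
      = (if u = v + 1 then m / 2 else 0) + (if u = v - 1 then m / 2 else 0) := by
    by_cases h1 : u = v + 1 <;> by_cases h2 : u = v - 1
    · exfalso; omega
    · rw [if_pos ((adj_iff v u).2 (Or.inl h1)), if_pos h1, if_neg h2, add_zero]
    · rw [if_pos ((adj_iff v u).2 (Or.inr h2)), if_neg h1, if_pos h2, zero_add]
    · rw [if_neg, if_neg h1, if_neg h2, add_zero]
      rw [adj_iff]; tauto
  rw [h]
  congr

lemma sum_topple (E : Finset ℤ) (μ : ℤ → ℝ) (v : ℤ) (m : ℝ)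
    (h1 : v - 1 ∈ E) (h0 : v ∈ E) (h2 : v + 1 ∈ E) (f : ℤ → ℝ) :
    ∑ x ∈ E, topple intGraph μ v m x * f x =
      (∑ x ∈ E, μ x * f x) - m * f v + m / 2 * (f (v + 1) + f (v - 1)) := by
  have hcongr : ∀ x ∈ E, topple intGraph μ v m x * f x =
      μ x * f x - (if x = v then m * f x else 0)
        + ((if x = v + 1 then m / 2 * f x else 0) + (if x = v - 1 then m / 2 * f x else 0)) := by
    intro x _
    rw [topple_apply]
    split_ifs <;> first | (exfalso; omega) | ring
  rw [Finset.sum_congr rfl hcongr, Finset.sum_add_distrib, Finset.sum_sub_distrib,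
    Finset.sum_add_distrib, Finset.sum_ite_eq' E v (fun x => m * f x),
    Finset.sum_ite_eq' E (v + 1) (fun x => m / 2 * f x),
    Finset.sum_ite_eq' E (v - 1) (fun x => m / 2 * f x),
    if_pos h0, if_pos h2, if_pos h1]
  ring

lemma topple_nonneg (μ : ℤ → ℝ) (v : ℤ) (m : ℝ) (hm : 0 < m) (hmv : m ≤ μ v)
    (h : ∀ u, 0 ≤ μ u) : ∀ u, 0 ≤ topple intGraph μ v m u := by
  intro u
  rw [topple_apply]
  by_cases h1 : u = v
  · subst h1
    rw [if_pos rfl, if_neg (by omega), if_neg (by omega)]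
    linarith
  · rw [if_neg h1]
    have := h u
    split_ifs <;> linarith [hm.le]

lemma topple_support (μ : ℤ → ℝ) (v : ℤ) (m : ℝ) (u : ℤ) (hu : μ u = 0)
    (h1 : u ≠ v) (h2 : u ≠ v + 1) (h3 : u ≠ v - 1) : topple intGraph μ v m u = 0 := by
  rw [topple_apply, if_neg h1, if_neg h2, if_neg h3, hu]
  ring

lemma dist_le_natAbs (x : ℤ) : intGraph.dist 0 x ≤ x.natAbs := by
  suffices h : ∀ (k : ℕ) (x : ℤ), x.natAbs = k → ∃ w : intGraph.Walk 0 x, w.length = k by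
    obtain ⟨w, hw⟩ := h x.natAbs x rfl
    calc intGraph.dist 0 x ≤ w.length := SimpleGraph.dist_le w
      _ = x.natAbs := hw
  intro k
  induction k with
  | zero =>
    intro x hx
    have hx0 : x = 0 := by omega
    subst hx0
    exact ⟨SimpleGraph.Walk.nil, rfl⟩
  | succ k ih =>
    intro x hx
    set y : ℤ := if 0 < x then x - 1 else x + 1 with hy
    have hyk : y.natAbs = k := by rw [hy]; split <;> omega
    obtain ⟨w, hw⟩ := ih y hyk
    have hadj : intGraph.Adj y x := by
      rw [adj_iff, hy]; split <;> omega
    exact ⟨w.concat hadj, by rw [SimpleGraph.Walk.length_concat, hw]⟩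

end ZLowerAux

open ZLowerAux

set_option maxHeartbeats 2000000

/-- **Lower bound on `ℤ`** (Florescu–Peres–Rácz / Paterson et al., Section 2.4).
For `p ∈ (0,1)`, starting from the unit point mass at the origin of `ℤ`, every sequence of
toppling moves transporting mass `p` to graph distance at least `n` from the origin has length
at least `(p²/2)·n³`, for every `n ≥ 1`. -/
theorem lower_bound_Z (p : ℝ) (hp0 : 0 < p) (hp1 : p < 1) (n : ℕ) (hn : 1 ≤ n) :
    ∀ t : ℕ, CanTransport intGraph (gball intGraph 0 n) p (pointMass 0) t →
      p ^ 2 / 2 * (n : ℝ) ^ 3 ≤ (t : ℝ) := by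
  intro t hct
  obtain ⟨μt, ⟨μs, hμ0, hμt, hstep⟩, hout⟩ := hct
  -- choose the moves
  have hch : ∀ i, ∃ (v : ℤ) (m : ℝ), i < t →
      0 < m ∧ m ≤ μs i v ∧ μs (i + 1) = topple intGraph (μs i) v m := by
    intro i
    by_cases h : i < t
    · obtain ⟨v, m, hm⟩ := hstep i h
      exact ⟨v, m, fun _ => hm⟩
    · exact ⟨0, 0, fun h' => absurd h' h⟩
  choose Vf Mf hVM using hch
  -- a finite carrier set
  set E : Finset ℤ :=
    insert 0 ((Finset.range t).biUnion (fun i => {Vf i - 1, Vf i, Vf i + 1})) with hE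
  have hmemE : ∀ i < t, Vf i - 1 ∈ E ∧ Vf i ∈ E ∧ Vf i + 1 ∈ E := by
    intro i hi
    refine ⟨?_, ?_, ?_⟩ <;>
      · rw [hE]
        exact Finset.mem_insert_of_mem
          (Finset.mem_biUnion.2 ⟨i, Finset.mem_range.2 hi, by simp⟩)
  have h0E : (0:ℤ) ∈ E := Finset.mem_insert_self _ _
  -- the invariant
  have key : ∀ i, i ≤ t →
      (∀ u, 0 ≤ μs i u) ∧ (∀ u, u ∉ E → μs i u = 0) ∧
      (∑ x ∈ E, μs i x = 1) ∧
      (∑ x ∈ E, μs i x * (x:ℝ) ^ 2 = ∑ j ∈ Finset.range i, Mf j) ∧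
      ((∑ j ∈ Finset.range i, (Mf j) ^ 2) ≤
        ∑ x ∈ E, μs i x * (∑ y ∈ E, μs i y * |(x:ℝ) - (y:ℝ)|)) := by
    intro i
    induction i with
    | zero =>
      intro _
      have hpm : ∀ x : ℤ, μs 0 x = if x = 0 then (1:ℝ) else 0 := by
        intro x
        by_cases hx : x = 0 <;> simp [hμ0, pointMass, hx]
      refine ⟨?_, ?_, ?_, ?_, ?_⟩
      · intro u; rw [hpm]; split <;> norm_num
      · intro u hu; rw [hpm]; rw [if_neg]; intro h; exact hu (h ▸ h0E)
      · rw [Finset.sum_congr rfl (fun x _ => hpm x), Finset.sum_ite_eq' E 0 (fun _ => (1:ℝ)),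
          if_pos h0E]
      · have : ∀ x ∈ E, μs 0 x * (x:ℝ) ^ 2 = if x = 0 then ((x:ℝ)^2) else 0 := by
          intro x _; rw [hpm]; split_ifs <;> ring
        rw [Finset.sum_congr rfl this, Finset.sum_ite_eq' E 0 (fun x => ((x:ℝ)^2)), if_pos h0E]
        simp
      · have hinner : ∀ x ∈ E, μs 0 x * (∑ y ∈ E, μs 0 y * |(x:ℝ) - (y:ℝ)|)
            = if x = 0 then (∑ y ∈ E, μs 0 y * |(x:ℝ) - (y:ℝ)|) else 0 := by
          intro x _; rw [hpm]; split_ifs <;> ring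
        rw [Finset.sum_congr rfl hinner,
          Finset.sum_ite_eq' E 0 (fun x => (∑ y ∈ E, μs 0 y * |(x:ℝ) - (y:ℝ)|)), if_pos h0E]
        have : ∀ y ∈ E, μs 0 y * |((0:ℤ):ℝ) - (y:ℝ)| = if y = 0 then 0 else 0 := by
          intro y _; rw [hpm]; split_ifs with h
          · subst h; simp
          · ring
        rw [Finset.sum_congr rfl this]
        simp
    | succ i ih =>
      intro hit
      have hi : i < t := hit
      obtain ⟨hnn, hsupp, hmass, hS2, hD⟩ := ih (Nat.le_of_lt hi)
      obtain ⟨hm0, hmle, hrec⟩ := hVM i hi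
      obtain ⟨he1, he0, he2⟩ := hmemE i hi
      set v : ℤ := Vf i with hv
      set m : ℝ := Mf i with hm
      have hnn' : ∀ u, 0 ≤ μs (i+1) u := by
        rw [hrec]; exact topple_nonneg _ _ _ hm0 hmle hnn
      have hsupp' : ∀ u, u ∉ E → μs (i+1) u = 0 := by
        intro u hu
        rw [hrec]
        refine topple_support _ _ _ _ (hsupp u hu) ?_ ?_ ?_ <;>
          · intro h; rw [h] at hu; tauto
      have hmass' : ∑ x ∈ E, μs (i+1) x = 1 := by
        have hst := sum_topple E (μs i) v m he1 he0 he2 (fun _ => (1:ℝ))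
        simp only [mul_one] at hst
        rw [hrec, hst, hmass]
        ring
      have hS2' : ∑ x ∈ E, μs (i+1) x * (x:ℝ) ^ 2 = ∑ j ∈ Finset.range (i+1), Mf j := by
        rw [hrec, sum_topple E (μs i) v m he1 he0 he2 (fun x => ((x:ℝ)^2)), hS2,
          Finset.sum_range_succ]
        push_cast
        ring
      -- the spread inequality
      set ι : ℤ → ℝ := fun x =>
        -(m * |(x:ℝ) - (v:ℝ)|) + m / 2 * (|(x:ℝ) - ((v+1:ℤ):ℝ)| + |(x:ℝ) - ((v-1:ℤ):ℝ)|)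
        with hι
      have hι_nonneg : ∀ x, 0 ≤ ι x := by
        intro x
        rw [hι]
        have habs : 2 * |(x:ℝ) - (v:ℝ)| ≤ |(x:ℝ) - ((v+1:ℤ):ℝ)| + |(x:ℝ) - ((v-1:ℤ):ℝ)| := by
          have := abs_add_le ((x:ℝ) - ((v+1:ℤ):ℝ)) ((x:ℝ) - ((v-1:ℤ):ℝ))
          have he : ((x:ℝ) - ((v+1:ℤ):ℝ)) + ((x:ℝ) - ((v-1:ℤ):ℝ)) = 2 * ((x:ℝ) - (v:ℝ)) := by
            push_cast; ring
          rw [he] at this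
          calc 2 * |(x:ℝ) - (v:ℝ)| = |2 * ((x:ℝ) - (v:ℝ))| := by
                rw [abs_mul]; norm_num
            _ ≤ _ := this
        nlinarith [hm0.le]
      have hι_v : ι v = m := by
        rw [hι]; push_cast
        simp only [sub_self, abs_zero]
        rw [show (v:ℝ) - ((v:ℝ)+1) = -1 by ring, show (v:ℝ) - ((v:ℝ)-1) = 1 by ring]
        rw [abs_neg, abs_one]
        ring
      have hι_v1 : ι (v+1) = 0 := by
        rw [hι]; push_cast
        rw [show ((v:ℝ)+1) - (v:ℝ) = 1 by ring, show ((v:ℝ)+1) - ((v:ℝ)+1) = 0 by ring,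
          show ((v:ℝ)+1) - ((v:ℝ)-1) = 2 by ring]
        rw [abs_one, abs_zero, show |(2:ℝ)| = 2 by norm_num]
        ring
      have hι_v2 : ι (v-1) = 0 := by
        rw [hι]; push_cast
        rw [show ((v:ℝ)-1) - (v:ℝ) = -1 by ring, show ((v:ℝ)-1) - ((v:ℝ)+1) = -2 by ring,
          show ((v:ℝ)-1) - ((v:ℝ)-1) = 0 by ring]
        rw [abs_neg, abs_one, abs_zero, show |(-2:ℝ)| = 2 by norm_num]
        ring
      have hsum_ι : m * m ≤ ∑ y ∈ E, μs i y * ι y := by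
        have h1 : μs i v * ι v ≤ ∑ y ∈ E, μs i y * ι y :=
          Finset.single_le_sum (fun y _ => mul_nonneg (hnn y) (hι_nonneg y)) he0
        rw [hι_v] at h1
        nlinarith [hnn v]
      -- inner sums after the move
      have hinner : ∀ x : ℤ, ∑ y ∈ E, μs (i+1) y * |(x:ℝ) - (y:ℝ)|
          = (∑ y ∈ E, μs i y * |(x:ℝ) - (y:ℝ)|) + ι x := by
        intro x
        rw [hrec, sum_topple E (μs i) v m he1 he0 he2 (fun y => |(x:ℝ) - (y:ℝ)|), hι]
        ring
      have houter : ∑ x ∈ E, μs (i+1) x * (∑ y ∈ E, μs (i+1) y * |(x:ℝ) - (y:ℝ)|)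
          = (∑ x ∈ E, μs (i+1) x * (∑ y ∈ E, μs i y * |(x:ℝ) - (y:ℝ)|))
            + ∑ x ∈ E, μs (i+1) x * ι x := by
        rw [← Finset.sum_add_distrib]
        refine Finset.sum_congr rfl (fun x _ => ?_)
        rw [hinner x]
        ring
      have hterm1 : ∑ x ∈ E, μs (i+1) x * (∑ y ∈ E, μs i y * |(x:ℝ) - (y:ℝ)|)
          = (∑ x ∈ E, μs i x * (∑ y ∈ E, μs i y * |(x:ℝ) - (y:ℝ)|))
            + ∑ y ∈ E, μs i y * ι y := by
        rw [hrec, sum_topple E (μs i) v m he1 he0 he2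
          (fun a => ∑ y ∈ E, μs i y * |(a:ℝ) - (y:ℝ)|)]
        have hids : m / 2 * ((∑ y ∈ E, μs i y * |((v+1:ℤ):ℝ) - (y:ℝ)|)
              + (∑ y ∈ E, μs i y * |((v-1:ℤ):ℝ) - (y:ℝ)|))
            - m * (∑ y ∈ E, μs i y * |((v:ℤ):ℝ) - (y:ℝ)|)
            = ∑ y ∈ E, μs i y * ι y := by
          rw [mul_add, Finset.mul_sum, Finset.mul_sum, Finset.mul_sum,
            ← Finset.sum_add_distrib, ← Finset.sum_sub_distrib]
          refine Finset.sum_congr rfl (fun y _ => ?_)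
          simp only [hι]
          rw [abs_sub_comm ((y:ℝ)) ((v:ℝ)), abs_sub_comm ((y:ℝ)) (((v+1:ℤ)):ℝ),
            abs_sub_comm ((y:ℝ)) (((v-1:ℤ)):ℝ)]
          ring
        linarith [hids]
      have hterm2 : ∑ x ∈ E, μs (i+1) x * ι x
          = (∑ x ∈ E, μs i x * ι x) - m * m := by
        rw [hrec, sum_topple E (μs i) v m he1 he0 he2 ι, hι_v, hι_v1, hι_v2]
        ring
      have hD' : (∑ j ∈ Finset.range (i+1), (Mf j) ^ 2) ≤
          ∑ x ∈ E, μs (i+1) x * (∑ y ∈ E, μs (i+1) y * |(x:ℝ) - (y:ℝ)|) := by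
        rw [houter, hterm1, hterm2, Finset.sum_range_succ]
        have := hsum_ι
        have hDold := hD
        nlinarith []
      exact ⟨hnn', hsupp', hmass', hS2', hD'⟩
  obtain ⟨hnn, hsupp, hmass, hS2, hD⟩ := key t le_rfl
  -- the total toppled mass
  set S : ℝ := ∑ j ∈ Finset.range t, Mf j with hS
  set A : Set ℤ := gball intGraph 0 n with hA
  -- mass outside the ball: tsum to finite sum
  have hμtt : μt = μs t := hμt.symm
  have htsum : ∑' w : {w : ℤ // w ∉ A}, μt ↑w = ∑ x ∈ E.filter (fun x => x ∉ A), μs t x := by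
    rw [hμtt]
    rw [tsum_eq_sum (s := (E.filter (fun x => x ∉ A)).subtype (fun w => w ∉ A))
      (by
        intro b hb
        apply hsupp
        intro hbE
        exact hb (Finset.mem_subtype.2 (Finset.mem_filter.2 ⟨hbE, b.2⟩)))]
    rw [Finset.sum_subtype_eq_sum_filter]
    refine Finset.sum_congr ?_ (fun x _ => rfl)
    ext x
    simp [Finset.mem_filter]
  -- Chebyshev: second moment at the end is at least p * n^2
  have hcheb : p * (n:ℝ) ^ 2 ≤ S := by
    have hp_le : p ≤ ∑ x ∈ E.filter (fun x => x ∉ A), μs t x := by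
      rw [← htsum]; exact hout
    have hxbig : ∀ x ∈ E.filter (fun x => x ∉ A), (n:ℝ)^2 * μs t x ≤ μs t x * (x:ℝ)^2 := by
      intro x hx
      have hxA : x ∉ A := (Finset.mem_filter.1 hx).2
      have hdist : n ≤ intGraph.dist 0 x := by
        by_contra hlt
        exact hxA (by rw [hA]; exact lt_of_not_ge hlt)
      have hnat : n ≤ x.natAbs := le_trans hdist (dist_le_natAbs x)
      have hcast : (n:ℝ) ≤ |(x:ℝ)| := by
        calc (n:ℝ) ≤ (x.natAbs : ℝ) := by exact_mod_cast hnat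
          _ = |(x:ℝ)| := by rw [Nat.cast_natAbs, Int.cast_abs]
      have hsq : (n:ℝ)^2 ≤ (x:ℝ)^2 := by
        have := pow_le_pow_left₀ (by positivity) hcast 2
        rwa [sq_abs] at this
      nlinarith [hnn x]
    have hstep1 : (n:ℝ)^2 * p ≤ ∑ x ∈ E.filter (fun x => x ∉ A), μs t x * (x:ℝ)^2 := by
      calc (n:ℝ)^2 * p ≤ (n:ℝ)^2 * ∑ x ∈ E.filter (fun x => x ∉ A), μs t x := by
            apply mul_le_mul_of_nonneg_left hp_le (by positivity)
        _ = ∑ x ∈ E.filter (fun x => x ∉ A), (n:ℝ)^2 * μs t x := Finset.mul_sum _ _ _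
        _ ≤ _ := Finset.sum_le_sum hxbig
    have hstep2 : ∑ x ∈ E.filter (fun x => x ∉ A), μs t x * (x:ℝ)^2
        ≤ ∑ x ∈ E, μs t x * (x:ℝ)^2 :=
      Finset.sum_le_sum_of_subset_of_nonneg (Finset.filter_subset _ _)
        (fun x _ _ => mul_nonneg (hnn x) (sq_nonneg _))
    rw [hS2] at hstep2
    linarith
  have hSpos : 0 < S := lt_of_lt_of_le (by positivity) hcheb
  -- the first absolute moment and the spread bound
  set B : ℝ := ∑ x ∈ E, μs t x * |(x:ℝ)| with hB
  have hBnn : 0 ≤ B :=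
    Finset.sum_nonneg fun x _ => mul_nonneg (hnn x) (abs_nonneg _)
  have hDB : (∑ x ∈ E, μs t x * (∑ y ∈ E, μs t y * |(x:ℝ) - (y:ℝ)|)) ≤ 2 * B := by
    have hx : ∀ x ∈ E, (∑ y ∈ E, μs t y * |(x:ℝ) - (y:ℝ)|) ≤ |(x:ℝ)| + B := by
      intro x _
      have hy : ∀ y ∈ E, μs t y * |(x:ℝ) - (y:ℝ)| ≤ μs t y * (|(x:ℝ)| + |(y:ℝ)|) := by
        intro y _
        apply mul_le_mul_of_nonneg_left _ (hnn y)
        calc |(x:ℝ) - (y:ℝ)| = |(x:ℝ) + -(y:ℝ)| := by rw [sub_eq_add_neg]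
          _ ≤ |(x:ℝ)| + |-(y:ℝ)| := abs_add_le _ _
          _ = |(x:ℝ)| + |(y:ℝ)| := by rw [abs_neg]
      calc (∑ y ∈ E, μs t y * |(x:ℝ) - (y:ℝ)|)
          ≤ ∑ y ∈ E, μs t y * (|(x:ℝ)| + |(y:ℝ)|) := Finset.sum_le_sum hy
        _ = (∑ y ∈ E, μs t y) * |(x:ℝ)| + B := by
            simp only [mul_add]
            rw [Finset.sum_add_distrib, ← Finset.sum_mul, hB]
        _ = |(x:ℝ)| + B := by rw [hmass, one_mul]
    calc (∑ x ∈ E, μs t x * (∑ y ∈ E, μs t y * |(x:ℝ) - (y:ℝ)|))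
        ≤ ∑ x ∈ E, μs t x * (|(x:ℝ)| + B) :=
          Finset.sum_le_sum (fun x hxE => mul_le_mul_of_nonneg_left (hx x hxE) (hnn x))
      _ = B + (∑ x ∈ E, μs t x) * B := by
          simp only [mul_add]
          rw [Finset.sum_add_distrib, ← Finset.sum_mul, hB]
      _ = 2 * B := by rw [hmass, one_mul]; ring
  have hB2 : B ^ 2 ≤ S := by
    have hcs := Finset.sum_mul_sq_le_sq_mul_sq E
      (fun x => Real.sqrt (μs t x)) (fun x => Real.sqrt (μs t x) * |(x:ℝ)|)
    have he1 : ∀ x ∈ E, Real.sqrt (μs t x) * (Real.sqrt (μs t x) * |(x:ℝ)|)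
        = μs t x * |(x:ℝ)| := by
      intro x _; rw [← mul_assoc, Real.mul_self_sqrt (hnn x)]
    have he2 : ∀ x ∈ E, Real.sqrt (μs t x) ^ 2 = μs t x := fun x _ => Real.sq_sqrt (hnn x)
    have he3 : ∀ x ∈ E, (Real.sqrt (μs t x) * |(x:ℝ)|) ^ 2 = μs t x * (x:ℝ)^2 := by
      intro x _; rw [mul_pow, Real.sq_sqrt (hnn x), sq_abs]
    rw [Finset.sum_congr rfl he1, Finset.sum_congr rfl he2, Finset.sum_congr rfl he3,
      hmass, hS2, one_mul] at hcs
    rw [hB]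
    exact hcs
  have hBs : B ≤ Real.sqrt S := (Real.le_sqrt hBnn hSpos.le).2 hB2
  -- Cauchy–Schwarz over the moves
  have hcs2 : S ^ 2 ≤ (t:ℝ) * ∑ j ∈ Finset.range t, (Mf j) ^ 2 := by
    have hcs := Finset.sum_mul_sq_le_sq_mul_sq (Finset.range t) (fun _ => (1:ℝ)) Mf
    simp only [one_mul, one_pow] at hcs
    have h1 : (∑ _j ∈ Finset.range t, (1:ℝ)) = (t:ℝ) := by
      rw [Finset.sum_const, Finset.card_range, nsmul_eq_mul, mul_one]
    rw [h1, ← hS] at hcs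
    exact hcs
  have hchain : S ^ 2 ≤ (t:ℝ) * (2 * Real.sqrt S) := by
    calc S ^ 2 ≤ (t:ℝ) * ∑ j ∈ Finset.range t, (Mf j) ^ 2 := hcs2
      _ ≤ (t:ℝ) * (2 * Real.sqrt S) := by
          apply mul_le_mul_of_nonneg_left _ (Nat.cast_nonneg t)
          calc (∑ j ∈ Finset.range t, (Mf j) ^ 2)
              ≤ ∑ x ∈ E, μs t x * (∑ y ∈ E, μs t y * |(x:ℝ) - (y:ℝ)|) := hD
            _ ≤ 2 * B := hDB
            _ ≤ 2 * Real.sqrt S := by linarith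
  set r : ℝ := Real.sqrt S with hr
  have hr2 : r ^ 2 = S := Real.sq_sqrt hSpos.le
  have hrpos : 0 < r := Real.sqrt_pos.2 hSpos
  have hr3 : r ^ 3 ≤ 2 * (t:ℝ) := by
    have h4 : r ^ 3 * r ≤ (2 * (t:ℝ)) * r := by nlinarith [hchain, hr2]
    exact le_of_mul_le_mul_right h4 hrpos
  have hp_sqrt : p ≤ Real.sqrt p := by
    nlinarith [Real.sq_sqrt hp0.le, Real.sqrt_nonneg p, Real.sqrt_le_one.2 hp1.le]
  have hfin : p ^ 2 * (n:ℝ) ^ 3 ≤ r ^ 3 := by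
    have h6 : p * (n:ℝ) ≤ Real.sqrt S := by
      calc p * (n:ℝ) ≤ Real.sqrt p * (n:ℝ) :=
            mul_le_mul_of_nonneg_right hp_sqrt (Nat.cast_nonneg n)
        _ = Real.sqrt (p * (n:ℝ)^2) := by
            rw [Real.sqrt_mul hp0.le, Real.sqrt_sq (Nat.cast_nonneg n)]
        _ ≤ Real.sqrt S := Real.sqrt_le_sqrt hcheb
    have h5 : p * (n:ℝ)^2 * (p * (n:ℝ)) ≤ S * r := by
      apply mul_le_mul hcheb ?_ (by positivity) hSpos.le
      rw [hr]; exact h6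
    calc p ^ 2 * (n:ℝ) ^ 3 = p * (n:ℝ)^2 * (p * (n:ℝ)) := by ring
      _ ≤ S * r := h5
      _ = r ^ 3 := by rw [← hr2]; ring
  have : p ^ 2 * (n:ℝ) ^ 3 ≤ 2 * (t:ℝ) := le_trans hfin hr3
  linarith

end
end

section
/- Let G = (V,E) be a locally finite graph, let A ⊆ V, let p > 0, and let μ₀, μ₁, …, μ_t be a sequence of mass distributions on G such that for every i ∈ {1,…,t}, μ_i = T_{v_i}^{m_i} μ_{i−1} is obtained from μ_{i−1} by a toppling move at a vertex v_i ∈ A. Then N_p(G, A, μ_t) ≤ N_p(G, A, μ₀). -/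
open scoped Classical ENNReal

noncomputable section

variable {V : Type*}

/-- `minTopples G A p μ₀` : the minimum number of toppling moves needed to transport mass `p`
outside of the set `A`, starting from the mass distribution `μ₀` (with value `⊤` if this is
impossible). -/
def minTopples (G : SimpleGraph V) [G.LocallyFinite] (A : Set V) (p : ℝ)
    (μ₀ : V → ℝ) : ℕ∞ :=
  sInf {n : ℕ∞ | ∃ t : ℕ, n = (t : ℕ∞) ∧ CanTransport G A p μ₀ t}

lemma tsum_le_tsum_add_of_nonneg {β : Type*} {f d : β → ℝ} (hd : Summable d)
    (hd₀ : ∀ b, 0 ≤ d b) :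
    ∑' b, f b ≤ ∑' b, (f b + d b) := by
  by_cases hf : Summable f
  · rw [hf.tsum_add hd]
    linarith [(tsum_nonneg hd₀ : 0 ≤ ∑' b, d b)]
  · have hfd : ¬Summable (fun b => f b + d b) := fun h => hf (by simpa using h.sub hd)
    rw [tsum_eq_zero_of_not_summable hf, tsum_eq_zero_of_not_summable hfd]

section Topple

variable {G : SimpleGraph V} [G.LocallyFinite]

lemma topple_apply_self (μ : V → ℝ) (x : V) (a : ℝ) : topple G μ x a x = μ x - a := by
  simp [topple]

lemma topple_apply_of_ne (μ : V → ℝ) {x u : V} (hux : u ≠ x) (a : ℝ) :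
    topple G μ x a u = μ u + if G.Adj x u then a / G.degree x else 0 := by
  simp [topple, hux]

lemma le_topple_apply_of_ne (μ : V → ℝ) {x u : V} (hux : u ≠ x) {a : ℝ} (ha : 0 ≤ a) :
    μ u ≤ topple G μ x a u := by
  rw [topple_apply_of_ne μ hux]
  exact le_add_of_nonneg_right (by split_ifs <;> positivity)

lemma topple_zero (μ : V → ℝ) (x : V) : topple G μ x 0 = μ := by
  funext u
  simp [topple]

lemma topple_topple_self (μ : V → ℝ) (x : V) (a b : ℝ) :
    topple G (topple G μ x a) x b = topple G μ x (a + b) := by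
  funext u
  simp only [topple]
  split_ifs <;> ring

lemma topple_comm (μ : V → ℝ) (x y : V) (a b : ℝ) :
    topple G (topple G μ x a) y b = topple G (topple G μ y b) x a := by
  funext u
  simp only [topple]
  ring

/-- Off `A` a toppling at `x ∈ A` only adds mass, and only at the finitely many neighbours
of `x`. -/
lemma tsum_compl_le_topple {A : Set V} (μ : V → ℝ) {x : V} (hx : x ∈ A) {a : ℝ}
    (ha : 0 ≤ a) :
    ∑' v : {v : V // v ∉ A}, μ v ≤ ∑' v : {v : V // v ∉ A}, topple G μ x a v := by
  have hsupp : (Function.support fun v : {v : V // v ∉ A} =>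
      if G.Adj x v then a / G.degree x else 0).Finite :=
    ((G.neighborSet x).toFinite.preimage Subtype.val_injective.injOn).subset
      fun v hv => by by_contra h; exact hv (if_neg h)
  calc ∑' v : {v : V // v ∉ A}, μ v
      ≤ ∑' v : {v : V // v ∉ A}, (μ v + if G.Adj x v then a / G.degree x else 0) :=
        tsum_le_tsum_add_of_nonneg (summable_of_hasFiniteSupport hsupp)
          fun v => by split_ifs <;> positivity
    _ = ∑' v : {v : V // v ∉ A}, topple G μ x a v := by
        congr 1
        funext v
        exact (topple_apply_of_ne μ (ne_of_mem_of_not_mem hx v.2).symm a).symm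

end Topple

section CanTransport

variable {G : SimpleGraph V} [G.LocallyFinite] {A : Set V} {p : ℝ}

lemma canTransport_zero_iff {μ : V → ℝ} :
    CanTransport G A p μ 0 ↔ p ≤ ∑' v : {v : V // v ∉ A}, μ v := by
  constructor
  · rintro ⟨μ₁, ⟨μs, h₀, h₁, -⟩, hp⟩
    rwa [← h₁, h₀] at hp
  · intro hp
    exact ⟨μ, ⟨fun _ => μ, rfl, rfl, fun i hi => absurd hi i.not_lt_zero⟩, hp⟩

lemma canTransport_succ_iff {μ : V → ℝ} {k : ℕ} :
    CanTransport G A p μ (k + 1) ↔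
      ∃ v m, 0 < m ∧ m ≤ μ v ∧ CanTransport G A p (topple G μ v m) k := by
  constructor
  · rintro ⟨μ₁, ⟨μs, h₀, h₁, hs⟩, hp⟩
    obtain ⟨v, m, hm, hmv, h_first⟩ := hs 0 k.succ_pos
    subst h₀
    exact ⟨v, m, hm, hmv, μ₁,
      ⟨fun i => μs (i + 1), h_first, h₁, fun i hi => hs (i + 1) (by omega)⟩, hp⟩
  · rintro ⟨v, m, hm, hmv, μ₁, ⟨μs, h₀, h₁, hs⟩, hp⟩
    refine ⟨μ₁, ⟨fun i => if i = 0 then μ else μs (i - 1), by simp, by simp [h₁], ?_⟩,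
      hp⟩
    rintro (_ | i) hi
    · exact ⟨v, m, hm, hmv, by simp [h₀]⟩
    · simpa using hs i (by omega)

/-- A move of mass `0` is not a valid move, but skipping it costs nothing. -/
lemma exists_canTransport_le_succ_of_topple {μ : V → ℝ} {v : V} {m : ℝ} {k : ℕ}
    (hm : 0 ≤ m) (hmv : m ≤ μ v) (h : CanTransport G A p (topple G μ v m) k) :
    ∃ j ≤ k + 1, CanTransport G A p μ j := by
  rcases hm.lt_or_eq with hm | rfl
  · exact ⟨k + 1, le_rfl, canTransport_succ_iff.2 ⟨v, m, hm, hmv, h⟩⟩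
  · exact ⟨k, k.le_succ, by rwa [topple_zero] at h⟩

/-- If the first move of a sequence is at a vertex `y ≠ x`, it commutes with the toppling at
`x`; if it is at `x` itself, the two topplings merge into one. -/
lemma exists_canTransport_topple_le {x : V} (hx : x ∈ A) {N : ℕ} :
    ∀ {μ : V → ℝ} {a : ℝ}, 0 ≤ a → a ≤ μ x → CanTransport G A p μ N →
      ∃ k ≤ N, CanTransport G A p (topple G μ x a) k := by
  induction N with
  | zero =>
    intro μ a ha _ h
    exact ⟨0, le_rfl, canTransport_zero_iff.2
      ((canTransport_zero_iff.1 h).trans (tsum_compl_le_topple μ hx ha))⟩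
  | succ N ih =>
    intro μ a ha hax h
    obtain ⟨y, m, hm, hmy, h⟩ := canTransport_succ_iff.1 h
    by_cases hxy : x = y
    · subst hxy
      rcases le_total a m with ham | hma
      · refine exists_canTransport_le_succ_of_topple (sub_nonneg.2 ham)
          (by rw [topple_apply_self]; linarith) ?_
        rwa [topple_topple_self, add_sub_cancel]
      · obtain ⟨k, hk, hk'⟩ := ih (sub_nonneg.2 hma) (by rw [topple_apply_self]; linarith) h
        rw [topple_topple_self, add_sub_cancel] at hk'
        exact ⟨k, by omega, hk'⟩
    · obtain ⟨k, hk, hk'⟩ := ih ha (hax.trans (le_topple_apply_of_ne μ hxy hm.le)) h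
      rw [topple_comm] at hk'
      exact ⟨k + 1, by omega, canTransport_succ_iff.2
        ⟨y, m, hm, hmy.trans (le_topple_apply_of_ne μ (Ne.symm hxy) ha), hk'⟩⟩

lemma minTopples_topple_le {μ : V → ℝ} {x : V} (hx : x ∈ A) {a : ℝ} (ha : 0 ≤ a)
    (hax : a ≤ μ x) : minTopples G A p (topple G μ x a) ≤ minTopples G A p μ := by
  refine le_sInf ?_
  rintro _ ⟨N, rfl, hN⟩
  obtain ⟨k, hk, hk'⟩ := exists_canTransport_topple_le hx ha hax hN
  calc minTopples G A p (topple G μ x a) ≤ k := sInf_le ⟨k, rfl, hk'⟩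
    _ ≤ N := by exact_mod_cast hk

end CanTransport

theorem smoothing_seq_le_general {V : Type*} (G : SimpleGraph V) [G.LocallyFinite]
    (A : Set V) (p : ℝ) (t : ℕ) (μs : ℕ → V → ℝ)
    (hstep : ∀ i < t, ∃ v m, v ∈ A ∧ 0 < m ∧ m ≤ μs i v ∧
      μs (i + 1) = topple G (μs i) v m) :
    minTopples G A p (μs t) ≤ minTopples G A p (μs 0) := by
  induction t with
  | zero => exact le_rfl
  | succ n ih =>
    obtain ⟨v, m, hvA, hm, hmv, h_next⟩ := hstep n n.lt_succ_self
    rw [h_next]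
    exact (minTopples_topple_le hvA hm.le hmv).trans (ih fun i hi => hstep i (by omega))

/-- **Smoothing corollary** (Florescu–Peres–Rácz, Corollary 3.2).
If `μ₀, μ₁, …, μ_t` is a sequence of mass distributions on a locally finite graph `G` obtained
by successive toppling moves all performed at vertices of `A`, then
`N_p(G, A, μ_t) ≤ N_p(G, A, μ₀)`. -/
theorem smoothing_seq_le {V : Type*} (G : SimpleGraph V) [G.LocallyFinite]
    (A : Set V) (p : ℝ) (hp : 0 < p) (t : ℕ) (μs : ℕ → V → ℝ)
    (hmass : IsMassDist (μs 0))
    (hstep : ∀ i < t, ∃ v m, v ∈ A ∧ 0 < m ∧ m ≤ μs i v ∧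
      μs (i + 1) = topple G (μs i) v m) :
    minTopples G A p (μs t) ≤ minTopples G A p (μs 0) :=
  smoothing_seq_le_general G A p t μs hstep

end
end

section
/- Let d ≥ 2, let ℓ ≥ 0 be an integer, and let μ be a probability mass distribution on the d-ary tree T_d (a finitely supported function μ : V(T_d) → [0,∞) with total mass 1). If the average level M₁[μ] = Σ_{v} μ(v)·ℓ(v) satisfies M₁[μ] ≤ ℓ, then there exists a vertex v ∈ T_d with ℓ(v) ≤ ℓ and μ(v) ≥ d^{−(ℓ+1)} / 4, where ℓ(v) denotes the level of v, i.e., its graph distance from the root ρ. -/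
/-!
If every vertex of level at most `ℓ` had mass below `c = d^{-(ℓ+1)}/4`, then, as the ball of
radius `j` around the root has fewer than `2 d^j` vertices, `P(level ≤ j) ≤ 2 c d^j` for
`j ≤ ℓ`. The truncated tail-sum formula `∑_{j ≤ ℓ} P(level > j) ≤ M₁[μ] ≤ ℓ` then forces
`1 ≤ ∑_{j ≤ ℓ} P(level ≤ j) ≤ 4 c d^ℓ = 1/d`, which is absurd for `d ≥ 2`.
-/

open scoped Classical

noncomputable section

/-- The infinite `d`-ary tree: vertices are finite words over an alphabet of size `d`
(the root is the empty word `[]`), and each vertex `u` is adjacent to its `d` children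
`i :: u` and (if `u ≠ []`) to its parent. Every vertex has exactly `d` children. -/
def daryTree (d : ℕ) : SimpleGraph (List (Fin d)) where
  Adj u v := (∃ i : Fin d, v = i :: u) ∨ (∃ i : Fin d, u = i :: v)
  symm := ⟨fun u v h => h.symm⟩
  loopless := ⟨by
    rintro u (⟨i, h⟩ | ⟨i, h⟩) <;>
      · have := congrArg List.length h
        simp at this⟩

noncomputable instance daryTree.locallyFinite (d : ℕ) (u : List (Fin d)) :
    Fintype ((daryTree d).neighborSet u) :=
  Set.Finite.fintype <| by
    apply Set.Finite.subset
      ((Set.finite_range fun i : Fin d => i :: u).union (Set.finite_singleton u.tail))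
    rintro v hv
    rcases (hv : (∃ i : Fin d, v = i :: u) ∨ (∃ i : Fin d, u = i :: v)) with ⟨i, h⟩ | ⟨i, h⟩
    · exact Or.inl ⟨i, h.symm⟩
    · right
      simp [h]

open Finset

theorem daryTree_length_le_of_adj {d : ℕ} {u v : List (Fin d)} (h : (daryTree d).Adj u v) :
    v.length ≤ u.length + 1 := by
  rcases h with ⟨i, rfl⟩ | ⟨i, rfl⟩ <;> simp only [List.length_cons] <;> omega

theorem daryTree_length_le_walk_length {d : ℕ} {u v : List (Fin d)}
    (p : (daryTree d).Walk u v) : v.length ≤ u.length + p.length := by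
  induction p with
  | nil => simp
  | cons h _ ih =>
    have := daryTree_length_le_of_adj h
    simp only [SimpleGraph.Walk.length_cons]
    omega

theorem daryTree_exists_walk_nil {d : ℕ} (v : List (Fin d)) :
    ∃ p : (daryTree d).Walk v [], p.length = v.length := by
  induction v with
  | nil => exact ⟨.nil, rfl⟩
  | cons i v ih =>
    obtain ⟨p, hp⟩ := ih
    exact ⟨.cons (show (daryTree d).Adj (i :: v) v from Or.inr ⟨i, rfl⟩) p, by simp [hp]⟩

theorem daryTree_dist_nil (d : ℕ) (v : List (Fin d)) : (daryTree d).dist [] v = v.length := by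
  obtain ⟨p, hp⟩ := daryTree_exists_walk_nil v
  apply le_antisymm
  · rw [SimpleGraph.dist_comm, ← hp]
    exact SimpleGraph.dist_le p
  · obtain ⟨q, hq⟩ := p.reverse.reachable.exists_walk_length_eq_dist
    simpa [hq] using daryTree_length_le_walk_length q

theorem Nat.geomSum_range_succ_lt {m : ℕ} (hm : 2 ≤ m) (n : ℕ) :
    ∑ k ∈ range (n + 1), m ^ k < 2 * m ^ n := by
  have : ∑ k ∈ range n, m ^ k < m ^ n := Nat.geomSum_lt hm fun k hk => mem_range.1 hk
  rw [sum_range_succ]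
  omega

theorem Finset.card_le_sum_pow_of_forall_length_le {α : Type*} [Fintype α]
    {s : Finset (List α)} {j : ℕ} (hs : ∀ v ∈ s, v.length ≤ j) :
    #s ≤ ∑ k ∈ range (j + 1), Fintype.card α ^ k := by
  calc #s ≤ #((range (j + 1)).biUnion fun k =>
          (univ : Finset (List.Vector α k)).image Subtype.val) :=
        card_le_card fun v hv => mem_biUnion.2 ⟨v.length, mem_range.2 (Nat.lt_succ_of_le (hs v hv)),
          mem_image_of_mem Subtype.val (mem_univ (α := List.Vector α v.length) ⟨v, rfl⟩)⟩
    _ ≤ ∑ k ∈ range (j + 1), #((univ : Finset (List.Vector α k)).image Subtype.val) :=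
        card_biUnion_le
    _ ≤ ∑ k ∈ range (j + 1), Fintype.card α ^ k :=
        sum_le_sum fun k _ => card_image_le.trans (card_univ.trans (card_vector k)).le

theorem Finset.sum_range_sum_filter_le {α M : Type*} [AddCommMonoid M] (s : Finset α)
    (μ : α → M) (f : α → ℕ) (n : ℕ) :
    ∑ j ∈ range n, ∑ v ∈ s with f v ≤ j, μ v = ∑ v ∈ s, (n - f v) • μ v := by
  simp_rw [sum_filter]
  rw [sum_comm]
  refine sum_congr rfl fun v _ => ?_
  have : {j ∈ range n | f v ≤ j} = Ico (f v) n := by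
    ext j
    simp only [mem_filter, mem_range, mem_Ico]
    omega
  rw [← sum_filter, this, sum_const, Nat.card_Ico]

theorem Finset.natCast_mul_sum_sub_sum_mul_le {α R : Type*} [CommRing R] [PartialOrder R]
    [IsOrderedRing R] (s : Finset α) (μ : α → R) (hμ : ∀ v ∈ s, 0 ≤ μ v) (f : α → ℕ) (n : ℕ) :
    n * ∑ v ∈ s, μ v - ∑ v ∈ s, μ v * f v ≤ ∑ j ∈ range n, ∑ v ∈ s with f v ≤ j, μ v := by
  rw [sum_range_sum_filter_le, mul_sum, ← sum_sub_distrib]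
  refine sum_le_sum fun v hv => ?_
  have : (n : R) - f v ≤ ((n - f v : ℕ) : R) :=
    sub_le_iff_le_add.2 ((Nat.mono_cast le_tsub_add).trans_eq (Nat.cast_add _ _))
  calc n * μ v - μ v * f v = (n - f v) * μ v := by ring
    _ ≤ (n - f v) • μ v := by
      rw [nsmul_eq_mul]
      exact mul_le_mul_of_nonneg_right this (hμ v hv)

theorem sum_filter_length_le_le_two_mul_pow_mul {α : Type*} [Fintype α]
    (hα : 2 ≤ Fintype.card α) {s : Finset (List α)} {μ : List α → ℝ} {c : ℝ} (hc : 0 ≤ c)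
    {j : ℕ} (hμ : ∀ v ∈ s, v.length ≤ j → μ v ≤ c) :
    ∑ v ∈ s with v.length ≤ j, μ v ≤ 2 * Fintype.card α ^ j * c := by
  have hcard : #{v ∈ s | v.length ≤ j} ≤ 2 * Fintype.card α ^ j :=
    (card_le_sum_pow_of_forall_length_le fun v hv => (mem_filter.1 hv).2).trans
      (Nat.geomSum_range_succ_lt hα j).le
  calc ∑ v ∈ s with v.length ≤ j, μ v ≤ #{v ∈ s | v.length ≤ j} • c :=
        sum_le_card_nsmul _ _ _ fun v hv => (mem_filter.1 hv).elim (hμ v)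
    _ ≤ 2 * Fintype.card α ^ j * c := by
        rw [nsmul_eq_mul]
        gcongr
        exact_mod_cast hcard

/-- **Existence of a large mass at low levels** (Florescu–Peres–Rácz, Lemma 6.2).
Let `d ≥ 2` and let `μ` be a probability mass distribution on the `d`-ary tree (nonnegative,
finitely supported, total mass `1`). If the average level `M₁[μ] = ∑_v μ(v)·ℓ(v)` is at most `ℓ`,
where `ℓ(v)` is the graph distance of `v` from the root, then some vertex `v` at level at most
`ℓ` carries mass at least `d^{-(ℓ+1)}/4`. -/
theorem exists_large_mass_dary_tree (d : ℕ) (hd : 2 ≤ d) (ℓ : ℕ)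
    (μ : List (Fin d) → ℝ) (hnonneg : ∀ v, 0 ≤ μ v) (hfin : (Function.support μ).Finite)
    (htotal : ∑' v : List (Fin d), μ v = 1)
    (havg : ∑' v : List (Fin d), μ v * ((daryTree d).dist [] v : ℝ) ≤ (ℓ : ℝ)) :
    ∃ v : List (Fin d), (daryTree d).dist [] v ≤ ℓ ∧
      ((d : ℝ) ^ (ℓ + 1))⁻¹ / 4 ≤ μ v := by
  by_contra! hsmall
  simp only [daryTree_dist_nil] at hsmall havg
  set c := ((d : ℝ) ^ (ℓ + 1))⁻¹ / 4
  set F := hfin.toFinset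
  have hsupp : Function.support μ ⊆ F := by simp [F]
  rw [tsum_eq_sum' hsupp] at htotal
  rw [tsum_eq_sum' ((Function.support_mul_subset_left _ _).trans hsupp)] at havg
  have hgeom : ∑ j ∈ range (ℓ + 1), (d : ℝ) ^ j ≤ 2 * d ^ ℓ := by
    exact_mod_cast (Nat.geomSum_range_succ_lt hd ℓ).le
  have hlt : 1 / (d : ℝ) < 1 := (div_lt_one (by positivity)).2 (by exact_mod_cast hd)
  refine hlt.not_ge ?_
  calc (1 : ℝ) ≤ (ℓ + 1 : ℕ) * ∑ v ∈ F, μ v - ∑ v ∈ F, μ v * v.length := by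
        rw [htotal]; push_cast; linarith
    _ ≤ ∑ j ∈ range (ℓ + 1), ∑ v ∈ F with v.length ≤ j, μ v :=
        natCast_mul_sum_sub_sum_mul_le F μ (fun v _ => hnonneg v) _ _
    _ ≤ ∑ j ∈ range (ℓ + 1), 2 * (Fintype.card (Fin d) : ℝ) ^ j * c := by
        refine sum_le_sum fun j hj => sum_filter_length_le_le_two_mul_pow_mul
          (by simpa using hd) (by positivity) fun v _ hv => (hsmall v ?_).le
        exact hv.trans (Nat.lt_succ_iff.1 (mem_range.1 hj))
    _ ≤ 2 * (2 * d ^ ℓ) * c := by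
        rw [Fintype.card_fin, ← sum_mul, ← mul_sum]
        gcongr
    _ = 1 / d := by
        simp only [c]
        field_simp
        ring

end
end
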